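/- Let V be a nontrivial variety of Heyting algebras containing the Heyting algebra 2²⊕1 (the four-element Boolean algebra with a new top adjoined), and let F be the free Heyting algebra for V of denumerable rank. Then the four-element Heyting algebra 2² does not embed into F. -/

import Mathlib

/-- A bundled Heyting algebra. -/
structure HAlg where
  carrier : Type
  [str : HeytingAlgebra carrier]

attribute [instance] HAlg.str

/-- Direct product of a family of Heyting algebras. -/
def HAlg.pi {I : Type} (A : I → HAlg) : HAlg := ⟨∀ i, (A i).carrier⟩

/-- A class of Heyting algebras is a variety if it is closed under homomorphic images,
subalgebras (injective Heyting homomorphisms) and direct products. -/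
def IsHVariety (V : Set HAlg) : Prop :=
  (∀ A ∈ V, ∀ B : HAlg, ∀ f : HeytingHom A.carrier B.carrier,
      Function.Surjective f → B ∈ V) ∧
  (∀ A : HAlg, ∀ B ∈ V, ∀ f : HeytingHom A.carrier B.carrier,
      Function.Injective f → A ∈ V) ∧
  (∀ (I : Type) (A : I → HAlg), (∀ i, A i ∈ V) → HAlg.pi A ∈ V)

/-! The five-element Heyting algebra `2² ⊕ 1`: the four-element Boolean algebra
`{o, a, b, c}` (with atoms `a`, `b` and `c = a ∨ b`) with a new top `i` adjoined. -/

inductive L5 | o | a | b | c | i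
deriving DecidableEq

instance : Fintype L5 where
  elems := {.o, .a, .b, .c, .i}
  complete := fun x => by cases x <;> simp

namespace L5

def leB : L5 → L5 → Bool
  | .o, _ => true
  | _, .i => true
  | .a, .a => true
  | .a, .c => true
  | .b, .b => true
  | .b, .c => true
  | .c, .c => true
  | _, _ => false

def supF : L5 → L5 → L5
  | .o, x => x
  | x, .o => x
  | .i, _ => .i
  | _, .i => .i
  | .a, .a => .a
  | .b, .b => .b
  | _, _ => .c

def infF : L5 → L5 → L5
  | .i, x => x
  | x, .i => x
  | .o, _ => .o
  | _, .o => .o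
  | .a, .b => .o
  | .b, .a => .o
  | .a, _ => .a
  | _, .a => .a
  | .b, _ => .b
  | _, .b => .b
  | _, _ => .c

instance : PartialOrder L5 where
  le x y := leB x y = true
  le_refl := (by decide : ∀ x : L5, leB x x = true)
  le_trans := (by decide : ∀ x y z : L5, leB x y = true → leB y z = true → leB x z = true)
  le_antisymm := (by decide : ∀ x y : L5, leB x y = true → leB y x = true → x = y)

instance : Lattice L5 where
  sup := supF
  le_sup_left := (by decide : ∀ x y : L5, leB x (supF x y) = true)
  le_sup_right := (by decide : ∀ x y : L5, leB y (supF x y) = true)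
  sup_le := (by decide : ∀ x y z : L5, leB x z = true → leB y z = true → leB (supF x y) z = true)
  inf := infF
  inf_le_left := (by decide : ∀ x y : L5, leB (infF x y) x = true)
  inf_le_right := (by decide : ∀ x y : L5, leB (infF x y) y = true)
  le_inf := (by decide : ∀ x y z : L5, leB x y = true → leB x z = true → leB x (infF y z) = true)

instance : OrderTop L5 where
  top := .i
  le_top := (by decide : ∀ x : L5, leB x .i = true)

instance : OrderBot L5 where
  bot := .o
  bot_le := (by decide : ∀ x : L5, leB .o x = true)

/-- Heyting implication: the largest `z` with `z ⊓ x ≤ y`. -/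
def himpF (x y : L5) : L5 :=
  (([.o, .a, .b, .c, .i] : List L5).filter fun z => leB (infF z x) y).foldr supF .o

instance : HeytingAlgebra L5 where
  himp := himpF
  le_himp_iff := (by decide : ∀ x y z : L5, leB x (himpF y z) = true ↔ leB (infF x y) z = true)
  compl x := himpF x .o
  himp_bot := fun _ => rfl

end L5

/-- The Heyting algebra `2² ⊕ 1` as an object. -/
def L5alg : HAlg := ⟨L5⟩

/-- The four-element Heyting algebra `2²`. -/
noncomputable def TwoSq : HAlg := ⟨Bool × Bool⟩

/-- `F` is free for `V` of denumerable rank (free generators `x 0, x 1, …`). -/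
def IsFreeHeyting (V : Set HAlg) (F : HAlg) (x : ℕ → F.carrier) : Prop :=
  F ∈ V ∧ ∀ A ∈ V, ∀ g : ℕ → A.carrier,
    ∃! h : HeytingHom F.carrier A.carrier, ∀ n, h (x n) = g n


/-! Free algebras are projective: a homomorphism `F → 2²` lifts along the surjection
`2² ⊕ 1 → 2²` that identifies the two top elements. Since `⊥` and `⊤` are the only complemented
elements of `2² ⊕ 1`, every homomorphism `F → 2²` therefore sends a complemented element of `F` to
`⊥` or `⊤`. On the other hand, by the prime ideal theorem applied to the Boolean algebra of regular
elements of `F`, the image of an embedding `2² → F` is separated by homomorphisms `F → Bool`, and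
pairing two of them gives a homomorphism `F → 2²` sending the image of an atom to an atom. -/

namespace Heyting

/-- Glivenko's theorem. -/
def toRegularHom (α : Type*) [HeytingAlgebra α] : HeytingHom α (Regular α) where
  toFun := Regular.toRegular
  map_sup' a b := Regular.coe_injective <| by
    simp only [Regular.coe_toRegular, Regular.coe_sup, compl_sup, compl_compl_compl]
  map_inf' a b := Regular.coe_injective <| compl_compl_inf_distrib a b
  map_bot' := Regular.coe_injective <| by
    simp only [Regular.coe_toRegular, compl_bot, compl_top, Regular.coe_bot]
  map_himp' a b := Regular.coe_injective <| compl_compl_himp_distrib a b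

theorem coe_toRegularHom_apply {α : Type*} [HeytingAlgebra α] (a : α) :
    (toRegularHom α a : α) = aᶜᶜ :=
  rfl

end Heyting

namespace Order.Ideal.IsPrime

variable {α : Type*} [Lattice α] [BoundedOrder α] {I : Ideal α}

open Classical in
noncomputable def toBoundedLatticeHom (hI : I.IsPrime) : BoundedLatticeHom α Bool where
  toFun a := decide (a ∉ I)
  map_sup' a b := by
    change decide _ = (decide _ || decide _)
    simp only [sup_mem_iff, not_and_or, Bool.decide_or]
  map_inf' a b := by
    have : a ⊓ b ∈ I ↔ a ∈ I ∨ b ∈ I :=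
      ⟨hI.mem_or_mem, fun h => h.elim (I.lower inf_le_left) (I.lower inf_le_right)⟩
    change decide _ = (decide _ && decide _)
    simp only [this, not_or, Bool.decide_and]
  map_top' := by simp only [hI.top_notMem, not_false_eq_true, decide_true]; rfl
  map_bot' := by simp only [bot_mem, not_true_eq_false, decide_false]; rfl

theorem toBoundedLatticeHom_apply_eq_true (hI : I.IsPrime) {a : α} :
    hI.toBoundedLatticeHom a = true ↔ a ∉ I := by
  classical
  exact decide_eq_true_iff

end Order.Ideal.IsPrime

theorem exists_heytingHom_bool_apply_eq_true {H : Type*} [HeytingAlgebra H] {u : H}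
    (hu : u ≠ ⊥) : ∃ φ : HeytingHom H Bool, φ u = true := by
  let r := Heyting.toRegularHom H
  have hru : r u ≠ ⊥ := fun h => hu <| le_bot_iff.mp <| le_compl_compl.trans <| by
    rw [← Heyting.coe_toRegularHom_apply, h, Heyting.Regular.coe_bot]
  have hdisj : Disjoint (Order.PFilter.principal (r u) : Set (Heyting.Regular H))
      (Order.Ideal.principal (⊥ : Heyting.Regular H) : Set (Heyting.Regular H)) := by
    refine Set.disjoint_left.mpr fun a hua ha => hru (le_bot_iff.mp ?_)
    exact (Order.PFilter.mem_principal.mp hua).trans (Order.Ideal.mem_principal.mp ha)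
  obtain ⟨J, hJ, -, hJu⟩ := DistribLattice.prime_ideal_of_disjoint_filter_ideal hdisj
  let χ := hJ.toBoundedLatticeHom
  let ψ : HeytingHom (Heyting.Regular H) Bool := ⟨χ.toLatticeHom, map_bot χ, map_himp χ⟩
  exact ⟨ψ.comp r, hJ.toBoundedLatticeHom_apply_eq_true.mpr <|
    Set.disjoint_left.mp hJu (Order.PFilter.mem_principal.mpr le_rfl)⟩

namespace L5

def collapse : HeytingHom L5 (Bool × Bool) where
  toFun
    | .o => (false, false)
    | .a => (true, false)
    | .b => (false, true)
    | .c => (true, true)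
    | .i => (true, true)
  map_sup' := by decide
  map_inf' := by decide
  map_bot' := by decide
  map_himp' := by decide

theorem collapse_surjective : Function.Surjective collapse := by
  decide

theorem eq_bot_or_eq_top_of_isCompl {y z : L5} (h : IsCompl y z) : y = ⊥ ∨ y = ⊤ :=
  (by decide : ∀ y z : L5, y ⊓ z = ⊥ → y ⊔ z = ⊤ → y = ⊥ ∨ y = ⊤) y z
    h.inf_eq_bot h.sup_eq_top

end L5

def HeytingHom.prod {α β γ : Type*} [HeytingAlgebra α] [HeytingAlgebra β] [HeytingAlgebra γ]
    (φ : HeytingHom α β) (ψ : HeytingHom α γ) : HeytingHom α (β × γ) where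
  toFun a := (φ a, ψ a)
  map_sup' a b := by simp only [map_sup, Prod.mk_sup_mk]
  map_inf' a b := by simp only [map_inf, Prod.mk_inf_mk]
  map_bot' := by simp only [map_bot]; rfl
  map_himp' a b := by simp only [map_himp]; rfl

@[simp]
theorem HeytingHom.prod_apply {α β γ : Type*} [HeytingAlgebra α] [HeytingAlgebra β]
    [HeytingAlgebra γ] (φ : HeytingHom α β) (ψ : HeytingHom α γ) (a : α) :
    φ.prod ψ a = (φ a, ψ a) :=
  rfl

namespace IsFreeHeyting

variable {V : Set HAlg} {F : HAlg} {x : ℕ → F.carrier}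

theorem hom_ext (hF : IsFreeHeyting V F x) {A : Type} [HeytingAlgebra A] (hA : HAlg.mk A ∈ V)
    {φ ψ : HeytingHom F.carrier A} (h : ∀ n, φ (x n) = ψ (x n)) : φ = ψ :=
  (hF.2 ⟨A⟩ hA fun n => ψ (x n)).unique h fun _ => rfl

theorem exists_comp_eq (hF : IsFreeHeyting V F x) {A B : Type} [HeytingAlgebra A]
    [HeytingAlgebra B] (hA : HAlg.mk A ∈ V) (hB : HAlg.mk B ∈ V) {p : HeytingHom A B}
    (hp : Function.Surjective p) (g : HeytingHom F.carrier B) :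
    ∃ ψ : HeytingHom F.carrier A, p.comp ψ = g := by
  obtain ⟨ψ, hψ, -⟩ := hF.2 ⟨A⟩ hA fun n => Function.surjInv hp (g (x n))
  exact ⟨ψ, hF.hom_ext hB fun n => by
    rw [HeytingHom.comp_apply, hψ, Function.surjInv_eq hp]⟩

theorem apply_eq_bot_or_eq_top_of_isCompl (hV : IsHVariety V) (hL5 : L5alg ∈ V)
    (hF : IsFreeHeyting V F x) (g : HeytingHom F.carrier (Bool × Bool)) {u v : F.carrier}
    (huv : IsCompl u v) : g u = ⊥ ∨ g u = ⊤ := by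
  have hTwoSq : TwoSq ∈ V := hV.1 L5alg hL5 TwoSq L5.collapse L5.collapse_surjective
  obtain ⟨ψ, rfl⟩ := hF.exists_comp_eq hL5 hTwoSq L5.collapse_surjective g
  rcases L5.eq_bot_or_eq_top_of_isCompl (huv.map ψ) with h | h
  · exact .inl (by rw [HeytingHom.comp_apply, h, map_bot])
  · exact .inr (by rw [HeytingHom.comp_apply, h, map_top])

end IsFreeHeyting

theorem stmt16_general (V : Set HAlg) (hV : IsHVariety V)
    (hL5 : L5alg ∈ V)
    (F : HAlg) (x : ℕ → F.carrier) (hF : IsFreeHeyting V F x) :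
    ¬ ∃ f : HeytingHom TwoSq.carrier F.carrier, Function.Injective f := by
  rintro ⟨(f : HeytingHom (Bool × Bool) F.carrier), hf⟩
  have hne_bot (z : Bool × Bool) (hz : z ≠ ⊥) : f z ≠ ⊥ := fun h =>
    hz (hf (h.trans (map_bot f).symm))
  obtain ⟨φ₁, hφ₁⟩ :=
    exists_heytingHom_bool_apply_eq_true (hne_bot (true, false) (by decide))
  obtain ⟨φ₂, hφ₂⟩ :=
    exists_heytingHom_bool_apply_eq_true (hne_bot (false, true) (by decide))
  let g := φ₁.prod φ₂
  have hgu : g (f (true, false)) ≠ ⊥ := fun h => by simp [g, hφ₁, Prod.ext_iff] at h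
  have hgv : g (f (false, true)) ≠ ⊥ := fun h => by simp [g, hφ₂, Prod.ext_iff] at h
  have huv : IsCompl (f (true, false)) (f (false, true)) :=
    IsCompl.map f ⟨disjoint_iff.mpr (by decide), codisjoint_iff.mpr (by decide)⟩
  rcases hF.apply_eq_bot_or_eq_top_of_isCompl hV hL5 g huv with h | h
  · exact hgu h
  · exact hgv (by simpa [h] using (huv.map g).inf_eq_bot)

/-- if `V` is a nontrivial variety of Heyting algebras containing
`2² ⊕ 1`, then the four-element Heyting algebra `2²` does not embed into the free
algebra `F` for `V` of denumerable rank. -/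
theorem stmt16 (V : Set HAlg) (hV : IsHVariety V)
    (hnt : ∃ A ∈ V, Nontrivial A.carrier)
    (hL5 : L5alg ∈ V)
    (F : HAlg) (x : ℕ → F.carrier) (hF : IsFreeHeyting V F x) :
    ¬ ∃ f : HeytingHom TwoSq.carrier F.carrier, Function.Injective f :=
  stmt16_general V hV hL5 F x hF
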